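/- Let L and L̃ be filtered SLie∞-algebras, n ≥ 1, and U : L → L̃ an ∞-morphism compatible with the filtrations whose linear term φ induces a quasi-isomorphism F_nL/F_{n+1}L → F_nL̃/F_{n+1}L̃. Let α and α' be MC elements of L with α' − α ∈ F_nL, and suppose there exists a rectified 1-cell β̃ = β̃_0(t_0) + dt_0 β̃_1 in MC_•(L̃) with β̃_1 ∈ (F_nL̃)^{−1}, β̃_0(0) = U_*(α) and β̃_0(1) = U_*(α'). Then α' − α, which represents a cocycle in the quotient complex F_nL/F_{n+1}L, represents a coboundary there: there exists ρ ∈ (F_nL)^{−1} with α' − α − ∂ρ ∈ F_{n+1}L. -/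

import Mathlib

/-!
# Filtered shifted L∞-algebras (core framework)

We work over a field `k` of characteristic zero.  A *shifted* L∞-algebra
(`SLie∞`-algebra) is modelled as an internally ℤ-graded `k`-module `L`
(`deg : ℤ → Submodule k L`, internal direct sum) with a degree `+1`
differential `diff`, and symmetric degree `+1` multibrackets
`br m : L^m → L` (`m ≥ 2`, extended by `0` for `m < 2`) which are graded
symmetric with Koszul signs and satisfy the generalized Jacobi relations.
A *filtered* `SLie∞`-algebra in addition carries a complete descending
filtration `F : ℕ → Submodule k L` (with `F 0 = F 1 = ⊤`) by subcomplexes,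
compatible with the brackets.

Infinite sums (curvature, twists, pushforwards of Maurer-Cartan elements, ...)
are expressed relationally via `IsLim`: `IsLim a x` says that the sequence of
partial sums `a` converges to `x` in the topology determined by the filtration.
-/

open Finset

noncomputable section

/-- The Koszul sign `ε(σ; v₁, …, v_m)` of a permutation `σ` acting on homogeneous
elements of degrees `d i`: the product of `(-1)^(d i * d j)` over all
inversions `(i, j)` of `σ`. -/
def koszulSign {m : ℕ} (d : Fin m → ℤ) (σ : Equiv.Perm (Fin m)) : ℤˣ :=
  ∏ p ∈ Finset.univ.filter (fun p : Fin m × Fin m => p.1 < p.2 ∧ σ p.2 < σ p.1),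
    (-1 : ℤˣ) ^ (d p.1 * d p.2)

theorem card_le_of_fin {m : ℕ} (S : Finset (Fin m)) : S.card ≤ m := by
  simpa using S.card_le_univ

/-- The `(S.card, m - S.card)`-shuffle permutation determined by a subset
`S ⊆ {0, …, m-1}`: it enumerates the elements of `S` (in increasing order) first
and then the elements of the complement of `S` (in increasing order). -/
def moveFrontPerm {m : ℕ} (S : Finset (Fin m)) : Equiv.Perm (Fin m) :=
  Tuple.sort (fun i => (toLex ((if i ∈ S then (0 : Fin 2) else 1), i) : Fin 2 ×ₗ Fin m))

/-- The index of the `j`-th element of the front block. -/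
def frontIdx {m : ℕ} (S : Finset (Fin m)) (j : Fin S.card) : Fin m :=
  ⟨j, lt_of_lt_of_le j.isLt (card_le_of_fin S)⟩

/-- The index of the `j`-th element of the back block. -/
def backIdx {m : ℕ} (S : Finset (Fin m)) (j : Fin (m - S.card)) : Fin m :=
  ⟨S.card + j, by have h1 := card_le_of_fin S; have h2 := j.isLt; omega⟩

variable (k : Type) [Field k] [CharZero k]

/-- A filtered shifted L∞-algebra (`SLie∞`-algebra) over `k`. -/
structure FilteredSLie where
  /-- underlying `k`-module -/
  L : Type
  [addgrp : AddCommGroup L]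
  [mod : Module k L]
  /-- internal ℤ-grading -/
  deg : ℤ → Submodule k L
  internal : DirectSum.IsInternal deg
  /-- the differential `∂` -/
  diff : L →ₗ[k] L
  diff_sq : ∀ x, diff (diff x) = 0
  diff_deg : ∀ (d : ℤ) (x), x ∈ deg d → diff x ∈ deg (d + 1)
  /-- degree `1` symmetric multibrackets `{·, …, ·}_m`; by convention `br m = 0` for `m < 2`. -/
  br : ∀ m : ℕ, MultilinearMap k (fun _ : Fin m => L) L
  br_low : ∀ m, m < 2 → br m = 0
  br_deg : ∀ (m : ℕ) (d : Fin m → ℤ) (v : Fin m → L), (∀ i, v i ∈ deg (d i)) →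
      br m v ∈ deg (1 + ∑ i, d i)
  br_symm : ∀ (m : ℕ) (d : Fin m → ℤ) (v : Fin m → L), (∀ i, v i ∈ deg (d i)) →
      ∀ σ : Equiv.Perm (Fin m), br m (v ∘ σ) = ((koszulSign d σ : ℤˣ) : ℤ) • br m v
  /-- the generalized Jacobi relations of a shifted L∞-algebra; the sum over
  `(p, m-p)`-shuffles is written as a sum over subsets `S` of cardinality `p`. -/
  jacobi : ∀ (m : ℕ), 2 ≤ m → ∀ (d : Fin m → ℤ) (v : Fin m → L), (∀ i, v i ∈ deg (d i)) →
      diff (br m v)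
        + ∑ i : Fin m,
            (((-1 : ℤˣ) ^ (∑ j ∈ Finset.univ.filter (fun j => j < i), d j) : ℤˣ) : ℤ) •
              br m (Function.update v i (diff (v i)))
        + ∑ S ∈ Finset.univ.filter (fun S : Finset (Fin m) => 2 ≤ S.card ∧ S.card ≤ m - 1),
            ((koszulSign d (moveFrontPerm S) : ℤˣ) : ℤ) •
              br (m - S.card + 1)
                (Fin.cons (br S.card fun j => v (moveFrontPerm S (frontIdx S j)))
                  (fun j => v (moveFrontPerm S (backIdx S j))))
        = 0
  /-- complete descending filtration `L = F 1 ⊇ F 2 ⊇ ⋯` (we also set `F 0 = ⊤`). -/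
  F : ℕ → Submodule k L
  F_zero : F 0 = ⊤
  F_one : F 1 = ⊤
  F_anti : ∀ {a b : ℕ}, a ≤ b → F b ≤ F a
  F_diff : ∀ (n : ℕ) (x), x ∈ F n → diff x ∈ F n
  F_graded : ∀ n : ℕ, F n = ⨆ d : ℤ, (F n ⊓ deg d)
  F_br : ∀ (m : ℕ) (ι : Fin m → ℕ) (v : Fin m → L), (∀ i, v i ∈ F (ι i)) →
      br m v ∈ F (∑ i, ι i)
  /-- the filtration is separated … -/
  sep : ∀ x : L, (∀ n, x ∈ F n) → x = 0
  /-- … and complete: `L = lim L / F n`. -/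
  complete : ∀ a : ℕ → L, (∀ n, a (n + 1) - a n ∈ F (n + 1)) →
      ∃ x, ∀ n, x - a n ∈ F (n + 1)

attribute [instance] FilteredSLie.addgrp FilteredSLie.mod

namespace FilteredSLie

variable {k}
variable (A : FilteredSLie k)

/-- `A.IsLim a x`: the sequence `a` converges to `x` in the filtration topology. -/
def IsLim (a : ℕ → A.L) (x : A.L) : Prop :=
  ∀ n : ℕ, ∃ N : ℕ, ∀ m ≥ N, x - a m ∈ A.F n

/-- Partial sums of the curvature `curv α = ∂α + Σ_{m ≥ 2} (1/m!) {α, …, α}_m`. -/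
def curvPartial (α : A.L) (M : ℕ) : A.L :=
  A.diff α + ∑ m ∈ Finset.range (M + 1), ((m.factorial : k)⁻¹) • A.br m (fun _ => α)

/-- `A.IsCurv α c` : `c = curv α`. -/
def IsCurv (α : A.L) (c : A.L) : Prop := A.IsLim (A.curvPartial α) c

/-- `α` is a Maurer-Cartan element: `α` has degree `0` and `curv α = 0`. -/
def IsMC (α : A.L) : Prop := α ∈ A.deg 0 ∧ A.IsCurv α 0

/-- Partial sums of the twisted differential
`∂^α v = ∂v + Σ_{m ≥ 1} (1/m!) {α, …, α, v}_{m+1}`. -/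
def twistDiffPartial (α v : A.L) (M : ℕ) : A.L :=
  A.diff v + ∑ m ∈ Finset.range (M + 1),
    ((m.factorial : k)⁻¹) • A.br (m + 1) (Fin.snoc (fun _ : Fin m => α) v)

/-- `A.IsTwistDiff α v w` : `w = ∂^α v`. -/
def IsTwistDiff (α v w : A.L) : Prop := A.IsLim (A.twistDiffPartial α v) w

/-! ### Coefficientwise operations on `L ⊗̂ k[t]`

An element of `L ⊗̂ k[t]` (power series whose coefficients tend to `0` in the
filtration topology) is modelled by its coefficient sequence `ℕ → L`. -/

/-- The `j`-th coefficient of the bracket of power series (Cauchy product). -/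
def coeffBr (m : ℕ) (c : Fin m → (ℕ → A.L)) (j : ℕ) : A.L :=
  ∑ f ∈ Finset.univ.filter (fun f : Fin m → Fin (j + 1) => ∑ i, ((f i : ℕ)) = j),
    A.br m (fun i => c i (f i))

/-- Partial sums of the `j`-th coefficient of `curv (β₀(t))`. -/
def coeffCurvPartial (b0 : ℕ → A.L) (j M : ℕ) : A.L :=
  A.diff (b0 j) +
    ∑ m ∈ Finset.range (M + 1), ((m.factorial : k)⁻¹) • A.coeffBr m (fun _ => b0) j

/-- Partial sums of the `j`-th coefficient of `∂^{β₀(t)} β₁(t)`. -/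
def coeffFlowPartial (b0 b1 : ℕ → A.L) (j M : ℕ) : A.L :=
  A.diff (b1 j) + ∑ m ∈ Finset.range (M + 1),
    ((m.factorial : k)⁻¹) •
      A.coeffBr (m + 1) (fun i : Fin (m + 1) => if (i : ℕ) < m then b0 else b1) j

/-- `A.IsEval1 b x` : the power series with coefficients `b` evaluates to `x` at `t = 1`. -/
def IsEval1 (b : ℕ → A.L) (x : A.L) : Prop :=
  A.IsLim (fun M => ∑ j ∈ Finset.range (M + 1), b j) x

end FilteredSLie

/-- A `1`-cell `β = β₀(t₀) + dt₀ β₁(t₀)` in the Deligne–Getzler–Hinich ∞-groupoid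
`MC_•(A)`, i.e. a Maurer–Cartan element of `A ⊗̂ Ω₁`: written in terms of the
coefficient sequences `b0` of `β₀` and `b1` of `β₁`.  The Maurer–Cartan equation
is equivalent to `curv (β₀(t₀)) = 0` (`mc`) together with
`(d/dt₀) β₀(t₀) = ∂^{β₀(t₀)} β₁(t₀)` (`flow`). -/
structure OneCell {k : Type} [Field k] [CharZero k] (A : FilteredSLie k) where
  b0 : ℕ → A.L
  b1 : ℕ → A.L
  b0_deg : ∀ j, b0 j ∈ A.deg 0
  b1_deg : ∀ j, b1 j ∈ A.deg (-1)
  b0_decay : ∀ n : ℕ, ∃ N, ∀ j ≥ N, b0 j ∈ A.F n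
  b1_decay : ∀ n : ℕ, ∃ N, ∀ j ≥ N, b1 j ∈ A.F n
  mc : ∀ j, A.IsLim (A.coeffCurvPartial b0 j) 0
  flow : ∀ j, A.IsLim (A.coeffFlowPartial b0 b1 j) ((j + 1) • b0 (j + 1))

namespace OneCell

variable {k : Type} [Field k] [CharZero k] {A : FilteredSLie k}

/-- A `1`-cell is *rectified* if `β₁` is constant in `t₀`. -/
def Rectified (c : OneCell A) : Prop := ∀ j, 1 ≤ j → c.b1 j = 0

/-- A `1`-cell connects `β₀(0)` to `β₀(1)`. -/
def Connects (c : OneCell A) (x y : A.L) : Prop :=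
  c.b0 0 = x ∧ A.IsEval1 c.b0 y

end OneCell

/-- `Q'_p`: the corestriction of the codifferential encoding the `SLie∞`-structure:
`Q'_1 = ∂` and `Q'_p = {·, …, ·}_p` for `p ≠ 1`. -/
def FilteredSLie.Qarg {k : Type} [Field k] [CharZero k]
    (A : FilteredSLie k) (p : ℕ) (w : Fin p → A.L) : A.L :=
  if h : p = 1 then A.diff (w ⟨0, by omega⟩) else A.br p w

/-- The permutation of `{0, …, m-1}` sorting the indices into the consecutive blocks
determined by `π : Fin m → Fin p` (each block listed in increasing order). -/
def sortByBlocks {m p : ℕ} (π : Fin m → Fin p) : Equiv.Perm (Fin m) :=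
  Tuple.sort (fun i => (toLex (π i, i) : Fin p ×ₗ Fin m))

/-- The block of a partition `π : Fin m → Fin p` over `i : Fin p`. -/
def blockFiber {m p : ℕ} (π : Fin m → Fin p) (i : Fin p) : Finset (Fin m) :=
  Finset.univ.filter (fun a => π a = i)


/-- An `∞`-morphism `U : A → B` of filtered `SLie∞`-algebras, compatible with the
filtrations.  It is recorded via its corestriction: the family of graded symmetric
degree-`0` multilinear maps `U' m : A^m → B` (`m ≥ 1`).  The field `compat` is the
componentwise form of the equation `U ∘ Q = Q̃ ∘ U` of coalgebra homomorphisms: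
the sum over `(p, m-p)`-shuffles is written as a sum over nonempty subsets `S`,
and the corestriction of `Q̃ ∘ U` as a sum over partitions of `{0, …, m-1}`
(with ordered blocks, whence the factor `1/p!`), encoded by surjections
`π : Fin m → Fin p`. -/
structure InfMorphism (A B : FilteredSLie k) where
  U' : ∀ m : ℕ, MultilinearMap k (fun _ : Fin m => A.L) B.L
  U'_zero : U' 0 = 0
  U'_deg : ∀ (m : ℕ) (d : Fin m → ℤ) (v : Fin m → A.L), (∀ i, v i ∈ A.deg (d i)) →
      U' m v ∈ B.deg (∑ i, d i)
  U'_symm : ∀ (m : ℕ) (d : Fin m → ℤ) (v : Fin m → A.L), (∀ i, v i ∈ A.deg (d i)) →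
      ∀ σ : Equiv.Perm (Fin m), U' m (v ∘ σ) = ((koszulSign d σ : ℤˣ) : ℤ) • U' m v
  U'_filt : ∀ (m : ℕ) (ι : Fin m → ℕ) (v : Fin m → A.L), (∀ i, v i ∈ A.F (ι i)) →
      U' m v ∈ B.F (∑ i, ι i)
  compat : ∀ (m : ℕ), 1 ≤ m → ∀ (d : Fin m → ℤ) (v : Fin m → A.L),
      (∀ i, v i ∈ A.deg (d i)) →
      (∑ S ∈ Finset.univ.filter (fun S : Finset (Fin m) => S.Nonempty),
        ((koszulSign d (moveFrontPerm S) : ℤˣ) : ℤ) •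
          U' (m - S.card + 1)
            (Fin.cons (A.Qarg S.card fun j => v (moveFrontPerm S (frontIdx S j)))
              (fun j => v (moveFrontPerm S (backIdx S j)))))
      =
      ∑ p ∈ Finset.Icc 1 m,
        ((p.factorial : k)⁻¹) •
          ∑ π ∈ Finset.univ.filter (fun π : Fin m → Fin p => Function.Surjective π),
            ((koszulSign d (sortByBlocks π) : ℤˣ) : ℤ) •
              B.Qarg p (fun i =>
                U' (blockFiber π i).card
                  (fun j => v (((blockFiber π i).orderIsoOfFin rfl j : Fin m))))

namespace InfMorphism

variable {k : Type} [Field k] [CharZero k] {A B : FilteredSLie k}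

/-- The linear term `φ` of an `∞`-morphism. -/
def lin (U : InfMorphism k A B) (x : A.L) : B.L := U.U' 1 (fun _ => x)

/-- Partial sums of `U_*(α) = Σ_{m ≥ 1} (1/m!) U'(α^m)`. -/
def pushPartial (U : InfMorphism k A B) (α : A.L) (M : ℕ) : B.L :=
  ∑ m ∈ Finset.range (M + 1), ((m.factorial : k)⁻¹) • U.U' m (fun _ => α)

/-- `U.IsPush α β` : `β = U_*(α)`. -/
def IsPush (U : InfMorphism k A B) (α : A.L) (β : B.L) : Prop :=
  B.IsLim (U.pushPartial α) β

/-- The `j`-th coefficient of `U'` applied to power series (Cauchy product). -/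
def coeffU (U : InfMorphism k A B) (m : ℕ) (c : Fin m → (ℕ → A.L)) (j : ℕ) : B.L :=
  ∑ f ∈ Finset.univ.filter (fun f : Fin m → Fin (j + 1) => ∑ i, ((f i : ℕ)) = j),
    U.U' m (fun i => c i (f i))

/-- `U.IsPushCell c c'` : the `1`-cell `c'` of `MC_•(B)` is the image
`(U ⊗̂ Ω₁)_* c` of the `1`-cell `c` of `MC_•(A)`. -/
def IsPushCell (U : InfMorphism k A B) (c : OneCell A) (c' : OneCell B) : Prop :=
  (∀ j, B.IsLim (fun M => ∑ m ∈ Finset.range (M + 1),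
      ((m.factorial : k)⁻¹) • U.coeffU m (fun _ => c.b0) j) (c'.b0 j)) ∧
  (∀ j, B.IsLim (fun M => ∑ m ∈ Finset.range (M + 1),
      ((m.factorial : k)⁻¹) •
        U.coeffU (m + 1) (fun i : Fin (m + 1) => if (i : ℕ) < m then c.b0 else c.b1) j)
      (c'.b1 j))

end InfMorphism

/-- The linear term `φ` of `U` restricts to a quasi-isomorphism of cochain complexes
`F_n A → F_n B`:  `φ` induces a surjection and an injection on the cohomology of the
subcomplexes `F_n` (in every internal degree `d`). -/
def IsQuasiIsoOnF {k : Type} [Field k] [CharZero k] {A B : FilteredSLie k}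
    (U : InfMorphism k A B) (n : ℕ) : Prop :=
  (∀ (d : ℤ) (x : B.L), x ∈ B.F n → x ∈ B.deg d → B.diff x = 0 →
      ∃ y z, y ∈ A.F n ∧ y ∈ A.deg d ∧ A.diff y = 0 ∧
        z ∈ B.F n ∧ z ∈ B.deg (d - 1) ∧ U.lin y - x = B.diff z) ∧
  (∀ (d : ℤ) (y : A.L), y ∈ A.F n → y ∈ A.deg d → A.diff y = 0 →
      (∃ z, z ∈ B.F n ∧ z ∈ B.deg (d - 1) ∧ U.lin y = B.diff z) →
      ∃ w, w ∈ A.F n ∧ w ∈ A.deg (d - 1) ∧ y = A.diff w)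

/-- The linear term `φ` of `U` induces a quasi-isomorphism of the associated graded
quotient complexes `F_n A / F_{n+1} A → F_n B / F_{n+1} B`. -/
def IsQuasiIsoOnGr {k : Type} [Field k] [CharZero k] {A B : FilteredSLie k}
    (U : InfMorphism k A B) (n : ℕ) : Prop :=
  (∀ (d : ℤ) (x : B.L), x ∈ B.F n → x ∈ B.deg d → B.diff x ∈ B.F (n + 1) →
      ∃ y z, y ∈ A.F n ∧ y ∈ A.deg d ∧ A.diff y ∈ A.F (n + 1) ∧
        z ∈ B.F n ∧ z ∈ B.deg (d - 1) ∧ U.lin y - x - B.diff z ∈ B.F (n + 1)) ∧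
  (∀ (d : ℤ) (y : A.L), y ∈ A.F n → y ∈ A.deg d → A.diff y ∈ A.F (n + 1) →
      (∃ z, z ∈ B.F n ∧ z ∈ B.deg (d - 1) ∧ U.lin y - B.diff z ∈ B.F (n + 1)) →
      ∃ w, w ∈ A.F n ∧ w ∈ A.deg (d - 1) ∧ y - A.diff w ∈ A.F (n + 1))

/-!
Put `y := α' - α ∈ F_n`. Modulo `F_{n+1}` every term of order `m ≥ 2` in `curv` and in `U_*`
is multilinear with one slot in `F_n` and the others in `F_1`, so it only sees the linear
parts: `∂y ≡ curv α' - curv α = 0` and `U_*(α') - U_*(α) ≡ φ(y)`. On the rectified 1-cell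
`β̃₁ ∈ F_n` forces the same collapse in the flow equation, so `β̃₀(t₀) ≡ U_*(α) + t₀ ∂β̃₁`, and
evaluating at `t₀ = 1` gives `φ(y) ≡ ∂β̃₁`. Thus `[y]` is a cocycle of `F_nL/F_{n+1}L` whose
image under the quasi-isomorphism `φ` is exact, hence `[y]` is itself exact.
-/

theorem MultilinearMap.map_const_sub_map_const_mem {R ι M N : Type*} [CommRing R]
    [AddCommGroup M] [Module R M] [AddCommGroup N] [Module R N] [Fintype ι] [LinearOrder ι]
    (f : MultilinearMap R (fun _ : ι => M) N) (p : Submodule R N) {x y : M}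
    (h : ∀ (i : ι) (v : ι → M), v i = x - y → f v ∈ p) :
    f (fun _ => x) - f (fun _ => y) ∈ p := by
  classical
  rw [← Finset.piecewise_univ (fun _ => y) (fun _ => x), f.map_sub_map_piecewise]
  exact Submodule.sum_mem _ fun i _ => h i _ (by simp)

namespace FilteredSLie

variable {k : Type} [Field k] {A : FilteredSLie k}

theorem F_antitone (A : FilteredSLie k) : Antitone A.F := fun _ _ h => A.F_anti h

theorem IsLim.sub {a b : ℕ → A.L} {x y : A.L} (ha : A.IsLim a x) (hb : A.IsLim b y) :
    A.IsLim (a - b) (x - y) := by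
  intro p
  obtain ⟨N₁, hN₁⟩ := ha p
  obtain ⟨N₂, hN₂⟩ := hb p
  refine ⟨max N₁ N₂, fun M hM => ?_⟩
  rw [Pi.sub_apply, sub_sub_sub_comm]
  exact sub_mem (hN₁ M (le_of_max_le_left hM)) (hN₂ M (le_of_max_le_right hM))

theorem IsLim.sub_mem_of_eventually {a : ℕ → A.L} {x c : A.L} {p : ℕ} (ha : A.IsLim a x)
    (h : ∀ᶠ M in Filter.atTop, a M - c ∈ A.F p) : x - c ∈ A.F p := by
  obtain ⟨M, hxa, hac⟩ := ((Filter.eventually_atTop.2 (ha p)).and h).exists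
  simpa using add_mem hxa hac

/-- Every argument lies in `F_1 = L`, so the argument `v j` raises the degree `n` of `v i` by one. -/
theorem map_mem_F_succ {W : Type} [AddCommGroup W] [Module k W] {m n : ℕ}
    {FW : ℕ → Submodule k W} (hFW : Antitone FW) (G : (Fin m → A.L) → W)
    (hG : ∀ (ι : Fin m → ℕ) (v : Fin m → A.L), (∀ i, v i ∈ A.F (ι i)) → G v ∈ FW (∑ i, ι i))
    {i j : Fin m} (hij : i ≠ j) {v : Fin m → A.L} (hv : v i ∈ A.F n) : G v ∈ FW (n + 1) := by
  classical
  refine hFW ?_ (hG (fun l => if l = i then n else 1) v fun l => ?_)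
  · calc n + 1 = ∑ l ∈ {i, j}, (if l = i then n else 1) := by
          simp [Finset.sum_pair hij, hij.symm]
      _ ≤ _ := Finset.sum_le_sum_of_subset (Finset.subset_univ _)
  · split_ifs with hl
    · exact hl ▸ hv
    · simp [A.F_one]

theorem map_const_sub_map_const_mem_F_succ {W : Type} [AddCommGroup W] [Module k W] {m n : ℕ}
    (hm : 2 ≤ m) {FW : ℕ → Submodule k W} (hFW : Antitone FW)
    (G : MultilinearMap k (fun _ : Fin m => A.L) W)
    (hG : ∀ (ι : Fin m → ℕ) (v : Fin m → A.L), (∀ i, v i ∈ A.F (ι i)) → G v ∈ FW (∑ i, ι i))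
    {x x' : A.L} (hx : x' - x ∈ A.F n) :
    G (fun _ => x') - G (fun _ => x) ∈ FW (n + 1) := by
  refine G.map_const_sub_map_const_mem _ fun i v hv => ?_
  have := Fin.nontrivial_iff_two_le.2 hm
  obtain ⟨j, hij⟩ := exists_ne i
  exact map_mem_F_succ hFW G hG hij.symm (hv ▸ hx)

theorem IsCurv.sub_sub_diff_mem {α α' c c' : A.L} {n : ℕ} (hc : A.IsCurv α c)
    (hc' : A.IsCurv α' c') (hα : α' - α ∈ A.F n) :
    c' - c - A.diff (α' - α) ∈ A.F (n + 1) := by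
  refine (hc'.sub hc).sub_mem_of_eventually (Filter.Eventually.of_forall fun M => ?_)
  have hsum : (A.curvPartial α' - A.curvPartial α) M - A.diff (α' - α) =
      ∑ m ∈ Finset.range (M + 1),
        ((m.factorial : k)⁻¹) • (A.br m (fun _ => α') - A.br m (fun _ => α)) := by
    simp only [Pi.sub_apply, curvPartial, smul_sub, Finset.sum_sub_distrib, map_sub]
    abel
  rw [hsum]
  refine Submodule.sum_mem _ fun m _ => Submodule.smul_mem _ _ ?_
  rcases Nat.lt_or_ge m 2 with hm | hm
  · simp [A.br_low m hm]
  · exact map_const_sub_map_const_mem_F_succ hm A.F_antitone _ (A.F_br m) hα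

theorem IsMC.diff_sub_mem {α α' : A.L} {n : ℕ} (hα : A.IsMC α) (hα' : A.IsMC α')
    (h : α' - α ∈ A.F n) : A.diff (α' - α) ∈ A.F (n + 1) := by
  simpa using neg_mem (hα.2.sub_sub_diff_mem hα'.2 h)

theorem IsEval1.sub_mem {b : ℕ → A.L} {x : A.L} {p : ℕ} (hb : A.IsEval1 b x)
    (hhigh : ∀ j, 2 ≤ j → b j ∈ A.F p) : x - (b 0 + b 1) ∈ A.F p := by
  refine hb.sub_mem_of_eventually (Filter.eventually_atTop.2 ⟨1, fun M hM => ?_⟩)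
  obtain ⟨K, rfl⟩ : ∃ K, M = K + 1 := ⟨M - 1, by omega⟩
  rw [Finset.sum_range_succ', Finset.sum_range_succ', add_assoc, add_comm (b _),
    add_sub_cancel_right]
  exact Submodule.sum_mem _ fun j _ => hhigh _ (by omega)

end FilteredSLie

namespace InfMorphism

variable {k : Type} [Field k] [CharZero k] {A B : FilteredSLie k}

theorem U'_one_const_sub (U : InfMorphism k A B) (x y : A.L) :
    U.U' 1 (fun _ => x) - U.U' 1 (fun _ => y) = U.lin (x - y) :=
  (((MultilinearMap.ofSubsingleton k A.L B.L 0).symm (U.U' 1)).map_sub x y).symm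

theorem IsPush.sub_sub_lin_mem {U : InfMorphism k A B} {α α' : A.L} {β β' : B.L} {n : ℕ}
    (hβ : U.IsPush α β) (hβ' : U.IsPush α' β') (hα : α' - α ∈ A.F n) :
    β' - β - U.lin (α' - α) ∈ B.F (n + 1) := by
  refine (hβ'.sub hβ).sub_mem_of_eventually (Filter.eventually_atTop.2 ⟨1, fun M hM => ?_⟩)
  obtain ⟨K, rfl⟩ : ∃ K, M = K + 1 := ⟨M - 1, by omega⟩
  have hsum : (U.pushPartial α' - U.pushPartial α) (K + 1) - U.lin (α' - α) =
      ∑ m ∈ Finset.range K, (((m + 2).factorial : k)⁻¹) •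
        (U.U' (m + 2) (fun _ => α') - U.U' (m + 2) (fun _ => α)) := by
    simp only [Pi.sub_apply, pushPartial, ← Finset.sum_sub_distrib, ← smul_sub]
    rw [Finset.sum_range_succ', Finset.sum_range_succ', U'_one_const_sub, U.U'_zero]
    simp
  rw [hsum]
  exact Submodule.sum_mem _ fun m _ => Submodule.smul_mem _ _ <|
    FilteredSLie.map_const_sub_map_const_mem_F_succ (by omega) B.F_antitone _ (U.U'_filt _) hα

end InfMorphism

namespace OneCell

variable {k : Type} [Field k] [CharZero k] {B : FilteredSLie k} {c : OneCell B} {n : ℕ}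

theorem flow_sub_diff_mem (hb1 : ∀ j, c.b1 j ∈ B.F n) (j : ℕ) :
    (j + 1) • c.b0 (j + 1) - B.diff (c.b1 j) ∈ B.F (n + 1) := by
  refine (c.flow j).sub_mem_of_eventually (Filter.Eventually.of_forall fun M => ?_)
  rw [FilteredSLie.coeffFlowPartial, add_sub_cancel_left]
  refine Submodule.sum_mem _ fun m _ => Submodule.smul_mem _ _ <|
    Submodule.sum_mem _ fun f _ => ?_
  rcases Nat.eq_zero_or_pos m with rfl | hm
  · simp [B.br_low 1 (by omega)]
  · exact FilteredSLie.map_mem_F_succ B.F_antitone _ (B.F_br _)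
      (i := Fin.last m) (j := 0) (by simp [Fin.ext_iff]; omega) (by simpa using hb1 _)

theorem Rectified.b1_mem (hc : c.Rectified) (h0 : c.b1 0 ∈ B.F n) (j : ℕ) : c.b1 j ∈ B.F n := by
  rcases j with _ | j
  · exact h0
  · simp [hc (j + 1) (by omega)]

theorem Rectified.b0_mem_of_two_le (hc : c.Rectified) (h0 : c.b1 0 ∈ B.F n) {j : ℕ}
    (hj : 2 ≤ j) : c.b0 j ∈ B.F (n + 1) := by
  obtain ⟨i, rfl⟩ : ∃ i, j = i + 1 + 1 := ⟨j - 2, by omega⟩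
  have h := flow_sub_diff_mem (hc.b1_mem h0) (i + 1)
  rw [hc (i + 1) (by omega), map_zero, sub_zero, ← Nat.cast_smul_eq_nsmul k] at h
  exact (Submodule.smul_mem_iff _ (Nat.cast_ne_zero.2 (Nat.succ_ne_zero _))).1 h

theorem Rectified.sub_sub_diff_mem (hc : c.Rectified) (h0 : c.b1 0 ∈ B.F n) {x y : B.L}
    (hxy : c.Connects x y) : y - x - B.diff (c.b1 0) ∈ B.F (n + 1) := by
  have heval := hxy.2.sub_mem fun j hj => hc.b0_mem_of_two_le h0 hj
  have hflow : c.b0 1 - B.diff (c.b1 0) ∈ B.F (n + 1) := by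
    simpa using flow_sub_diff_mem (hc.b1_mem h0) 0
  rw [← hxy.1]
  convert add_mem heval hflow using 1
  abel

end OneCell

theorem difference_is_coboundary_general
    {k : Type} [Field k] [CharZero k] {A B : FilteredSLie k}
    (U : InfMorphism k A B) (n : ℕ)
    (hqis : IsQuasiIsoOnGr U n)
    (α α' : A.L) (hα : A.IsMC α) (hα' : A.IsMC α')
    (hdiff : α' - α ∈ A.F n)
    (Uα Uα' : B.L) (hUα : U.IsPush α Uα) (hUα' : U.IsPush α' Uα')
    (c : OneCell B) (hrect : c.Rectified) (hc1 : c.b1 0 ∈ B.F n)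
    (hc : c.Connects Uα Uα') :
    ∃ ρ : A.L, ρ ∈ A.deg (-1) ∧ ρ ∈ A.F n ∧ α' - α - A.diff ρ ∈ A.F (n + 1) := by
  have hcocycle := hα.diff_sub_mem hα' hdiff
  have hpush := hUα.sub_sub_lin_mem hUα' hdiff
  have hcell := hrect.sub_sub_diff_mem hc1 hc
  have hexact : U.lin (α' - α) - B.diff (c.b1 0) ∈ B.F (n + 1) := by
    simpa only [sub_sub_sub_cancel_left] using sub_mem hcell hpush
  obtain ⟨ρ, hρF, hρdeg, hρ⟩ := hqis.2 0 (α' - α) hdiff (sub_mem hα'.1 hα.1) hcocycle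
    ⟨c.b1 0, hc1, by simpa using c.b1_deg 0, hexact⟩
  exact ⟨ρ, by simpa using hρdeg, hρF, hρ⟩

theorem difference_is_coboundary
    {k : Type} [Field k] [CharZero k] {A B : FilteredSLie k}
    (U : InfMorphism k A B) (n : ℕ) (hn : 1 ≤ n)
    (hqis : IsQuasiIsoOnGr U n)
    (α α' : A.L) (hα : A.IsMC α) (hα' : A.IsMC α')
    (hdiff : α' - α ∈ A.F n)
    (Uα Uα' : B.L) (hUα : U.IsPush α Uα) (hUα' : U.IsPush α' Uα')
    (c : OneCell B) (hrect : c.Rectified) (hc1 : c.b1 0 ∈ B.F n)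
    (hc : c.Connects Uα Uα') :
    ∃ ρ : A.L, ρ ∈ A.deg (-1) ∧ ρ ∈ A.F n ∧ α' - α - A.diff ρ ∈ A.F (n + 1) :=
  difference_is_coboundary_general U n hqis α α' hα hα' hdiff Uα Uα' hUα hUα' c hrect hc1 hc
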